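/- Let F = U S Vᵀ with U, V ∈ SO(3), S = diag(s₁,s₂,s₃), M = UVᵀ, and define sigma points R_i(±θ_i) = U exp(±θ_i êᵢ) Vᵀ for i ∈ {1,2,3}. Then the arithmetic mean R̄ = (1/7)(M + Σᵢ (R_i(θ_i) + R_i(−θ_i))) equals U D Vᵀ where D = diag(d₁,d₂,d₃) with d_i = (1/7)(3 + 2 cos θ_j + 2 cos θ_k) for (i,j,k) a cyclic permutation of (1,2,3). -/

import Mathlib

/-!
Since `êᵢ³ = -êᵢ`, only the even powers survive in the exponential series of
`exp (θ êᵢ) + exp (-θ êᵢ)`, and each of them is a multiple of `êᵢ² = eᵢeᵢᵀ - 1`, with the cosine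
series as coefficient. Hence every sigma point pair is `U (diagonal) Vᵀ`, and so is the mean.
-/

open Matrix Real

/-- The hat map: `hat x` is the skew-symmetric matrix with `(hat x) y = x × y`. -/
noncomputable def hat (x : Fin 3 → ℝ) : Matrix (Fin 3) (Fin 3) ℝ :=
  !![0, -x 2, x 1; x 2, 0, -x 0; -x 1, x 0, 0]

theorem sq_pow_succ_of_pow_three_eq_neg {R : Type*} [Ring R] {a : R} (h : a ^ 3 = -a) (n : ℕ) :
    (a ^ 2) ^ (n + 1) = (-1) ^ n * a ^ 2 := by
  induction n with
  | zero => simp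
  | succ n ih =>
    have h4 : a ^ 2 * a ^ 2 = -a ^ 2 := by
      rw [← pow_add, pow_succ', h, mul_neg, ← sq]
    rw [pow_succ, ih, mul_assoc, h4, pow_succ]
    noncomm_ring

namespace NormedSpace

variable {𝔸 : Type*} [NormedRing 𝔸]

theorem hasSum_exp_add_exp_neg (𝕂 : Type*) [RCLike 𝕂] [NormedAlgebra 𝕂 𝔸] [CompleteSpace 𝔸]
    (x : 𝔸) :
    HasSum (fun n => (2 * ((2 * n).factorial : 𝕂)⁻¹) • x ^ (2 * n)) (exp x + exp (-x)) := by
  have h := (exp_series_hasSum_exp' (𝕂 := 𝕂) x).add (exp_series_hasSum_exp' (𝕂 := 𝕂) (-x))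
  simp only [← smul_add] at h
  rw [← (mul_right_injective₀ two_ne_zero).hasSum_iff] at h
  · convert h using 2 with n
    simp [Function.comp_apply, Even.neg_pow (even_two_mul n), mul_smul, two_smul]
  · intro n hn
    obtain ⟨k, rfl | rfl⟩ := Nat.even_or_odd' n
    · exact absurd ⟨k, rfl⟩ hn
    · simp [(odd_two_mul_add_one k).neg_pow]

theorem exp_smul_add_exp_neg_smul_of_pow_three_eq_neg [NormedAlgebra ℝ 𝔸] [CompleteSpace 𝔸]
    {A : 𝔸} (h : A ^ 3 = -A) (t : ℝ) :
    exp (t • A) + exp ((-t) • A) = (2 : ℝ) • 1 + (2 - 2 * cos t) • A ^ 2 := by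
  set f : ℕ → 𝔸 := fun n => (2 * ((2 * n).factorial : ℝ)⁻¹) • (t • A) ^ (2 * n)
  have hterm (n : ℕ) :
      f (n + 1) = (-2 * ((-1) ^ (n + 1) * t ^ (2 * (n + 1)) / (2 * (n + 1)).factorial)) • A ^ 2 := by
    simp only [f]
    rw [smul_pow, pow_mul A, sq_pow_succ_of_pow_three_eq_neg h, smul_smul,
      show (-1 : 𝔸) ^ n * A ^ 2 = ((-1 : ℝ) ^ n) • A ^ 2 by simp [Algebra.smul_def], smul_smul]
    congr 1
    field_simp
    ring
  have htail : HasSum (fun n => f (n + 1)) ((-2 * (cos t - 1)) • A ^ 2) := by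
    simp_rw [hterm]
    simpa using (((hasSum_nat_add_iff' 1).mpr (Real.hasSum_cos t)).mul_left (-2)).smul_const (A ^ 2)
  have hexp := hasSum_exp_add_exp_neg ℝ (t • A)
  rw [← neg_smul] at hexp
  refine hexp.unique ?_
  convert htail.zero_add using 1
  simp [f]
  module

end NormedSpace

theorem Matrix.exp_smul_add_exp_neg_smul_of_pow_three_eq_neg {n : Type*} [Fintype n]
    [DecidableEq n] {A : Matrix n n ℝ} (h : A ^ 3 = -A) (t : ℝ) :
    NormedSpace.exp (t • A) + NormedSpace.exp ((-t) • A) =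
      (2 : ℝ) • 1 + (2 - 2 * cos t) • A ^ 2 := by
  let := Matrix.linftyOpNormedRing (n := n) (α := ℝ)
  let := Matrix.linftyOpNormedAlgebra (n := n) (R := ℝ) (α := ℝ)
  exact NormedSpace.exp_smul_add_exp_neg_smul_of_pow_three_eq_neg h t

theorem hat_sq (u : Fin 3 → ℝ) : hat u ^ 2 = vecMulVec u u - (u ⬝ᵥ u) • 1 := by
  ext i j
  fin_cases i <;> fin_cases j <;>
    simp [hat, sq, mul_apply, Fin.sum_univ_three, vecMulVec_apply, dotProduct, one_apply] <;> ring

theorem hat_pow_three (u : Fin 3 → ℝ) : hat u ^ 3 = -(u ⬝ᵥ u) • hat u := by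
  ext i j
  fin_cases i <;> fin_cases j <;>
    simp [hat, pow_succ, mul_apply, Fin.sum_univ_three, dotProduct] <;> ring

theorem hat_single_sq (i : Fin 3) : hat (Pi.single i 1) ^ 2 = diagonal (Pi.single i 1 - 1) := by
  rw [hat_sq]
  ext j k
  by_cases hjk : j = k <;> by_cases hij : i = j <;>
    simp [vecMulVec_apply, Pi.single_apply, one_apply, *]

theorem hat_single_pow_three (i : Fin 3) : hat (Pi.single i 1) ^ 3 = -hat (Pi.single i 1) := by
  simp [hat_pow_three]

theorem one_add_sum_two_add_smul_diagonal (θ : Fin 3 → ℝ) :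
    1 + ∑ i, ((2 : ℝ) • 1 + (2 - 2 * cos (θ i)) • diagonal (Pi.single i 1 - 1)) =
      diagonal (fun i => 3 + 2 * cos (θ (i + 1)) + 2 * cos (θ (i + 2))) := by
  ext j k
  fin_cases j <;> fin_cases k <;> simp [Fin.sum_univ_three, one_apply] <;> ring

theorem sigma_points_mean_general (U V : Matrix (Fin 3) (Fin 3) ℝ)
    (θ : Fin 3 → ℝ) :
    ((1 : ℝ) / 7) • (U * Vᵀ +
        ∑ i : Fin 3, (U * NormedSpace.exp (θ i • hat (Pi.single i 1)) * Vᵀ +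
          U * NormedSpace.exp ((-θ i) • hat (Pi.single i 1)) * Vᵀ)) =
      U * Matrix.diagonal
          (fun i => (3 + 2 * Real.cos (θ (i + 1)) + 2 * Real.cos (θ (i + 2))) / 7) * Vᵀ := by
  have hpair (i : Fin 3) :
      NormedSpace.exp (θ i • hat (Pi.single i 1)) + NormedSpace.exp ((-θ i) • hat (Pi.single i 1)) =
        (2 : ℝ) • 1 + (2 - 2 * cos (θ i)) • diagonal (Pi.single i 1 - 1) := by
    rw [← hat_single_sq]
    exact Matrix.exp_smul_add_exp_neg_smul_of_pow_three_eq_neg (hat_single_pow_three i) _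
  calc _ = U * ((1 / 7 : ℝ) • (1 + ∑ i : Fin 3, (NormedSpace.exp (θ i • hat (Pi.single i 1)) +
          NormedSpace.exp ((-θ i) • hat (Pi.single i 1))))) * Vᵀ := by
        simp only [Matrix.mul_smul, Matrix.smul_mul, Matrix.mul_add, Matrix.add_mul,
          Matrix.mul_sum, Matrix.sum_mul, Matrix.mul_one]
    _ = _ := by
        simp only [hpair]
        rw [one_add_sum_two_add_smul_diagonal, ← diagonal_smul]
        congr 3 with i
        simp [div_eq_inv_mul]

/-- The arithmetic mean of the seven sigma points `M = U Vᵀ` and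
`Rᵢ(±θᵢ) = U exp(±θᵢ êᵢ) Vᵀ` equals `U D Vᵀ`, where `D = diag d` with
`dᵢ = (3 + 2 cos θⱼ + 2 cos θₖ)/7` for `(i,j,k)` a cyclic permutation of `(1,2,3)`. -/
theorem sigma_points_mean (U V : Matrix (Fin 3) (Fin 3) ℝ)
    (hU : Uᵀ * U = 1 ∧ U.det = 1) (hV : Vᵀ * V = 1 ∧ V.det = 1)
    (θ : Fin 3 → ℝ) :
    ((1 : ℝ) / 7) • (U * Vᵀ +
        ∑ i : Fin 3, (U * NormedSpace.exp (θ i • hat (Pi.single i 1)) * Vᵀ +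
          U * NormedSpace.exp ((-θ i) • hat (Pi.single i 1)) * Vᵀ)) =
      U * Matrix.diagonal
          (fun i => (3 + 2 * Real.cos (θ (i + 1)) + 2 * Real.cos (θ (i + 2))) / 7) * Vᵀ :=
  sigma_points_mean_general U V θ
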